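/- Let V: ℝ² → ℝ satisfy sup_{y} ∫ |V(x)| |x−y|^{−1/2} dx ≤ C_V < ∞, let 0 < ε ≪ 1, q = (2ε)^{−1}, 1/p + 1/q = 1. Then there exists C₂ > 0 such that for all y, x' ∈ ℝ² and 0 < h ≤ 1: ∫_{ℝ²} |V(x)| ⟨|x−y|/h⟩^{−1/2} |x−x'|^{−ε} dx ≤ C₂ h^{1/2−ε}. -/
import Mathlib


open MeasureTheory Real ENNReal

lemma aux_near {h s ε v : ℝ} (hh0 : 0 < h) (hε0 : 0 < ε) (hε1 : ε < 1 / 2)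
    (hv : 0 ≤ v) (hs0 : 0 ≤ s) (hsh : s < h) {B : ℝ} (hB0 : 0 ≤ B) (hB1 : B ≤ 1) :
    v * B * s ^ (-ε) ≤ h ^ (1 / 2 - ε) * (v * s ^ (-(1 / 2) : ℝ)) := by
  rcases eq_or_lt_of_le hs0 with h0 | hs0'
  · simp [← h0, Real.zero_rpow (by linarith : -ε ≠ 0),
      Real.zero_rpow (by norm_num : (-(1 / 2) : ℝ) ≠ 0)]
  · have key : s ^ (-ε) ≤ h ^ (1 / 2 - ε) * s ^ (-(1 / 2) : ℝ) := by
      have h1 : s ^ (-ε) = s ^ (1 / 2 - ε) * s ^ (-(1 / 2) : ℝ) := by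
        rw [← Real.rpow_add hs0']; ring_nf
      rw [h1]
      have h2 : s ^ (1 / 2 - ε) ≤ h ^ (1 / 2 - ε) :=
        Real.rpow_le_rpow hs0 hsh.le (by linarith)
      exact mul_le_mul_of_nonneg_right h2 (Real.rpow_nonneg hs0 _)
    calc v * B * s ^ (-ε) ≤ v * 1 * s ^ (-ε) := by
          apply mul_le_mul_of_nonneg_right _ (Real.rpow_nonneg hs0 _)
          exact mul_le_mul_of_nonneg_left hB1 hv
      _ = v * s ^ (-ε) := by ring
      _ ≤ v * (h ^ (1 / 2 - ε) * s ^ (-(1 / 2) : ℝ)) := mul_le_mul_of_nonneg_left key hv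
      _ = h ^ (1 / 2 - ε) * (v * s ^ (-(1 / 2) : ℝ)) := by ring

lemma aux_far {h r s ε v : ℝ} (hh0 : 0 < h) (hε0 : 0 < ε) (hε1 : ε < 1 / 2)
    (hv : 0 ≤ v) (hr : 0 < r) (hs : h ≤ s) :
    v * (1 + (r / h) ^ 2) ^ (-(1 / 4) : ℝ) * s ^ (-ε) ≤
      h ^ (1 / 2 - ε) * (v * r ^ (-(1 / 2) : ℝ)) := by
  have ht : 0 < r / h := div_pos hr hh0
  have hB : (1 + (r / h) ^ 2) ^ (-(1 / 4) : ℝ) ≤ (r / h) ^ (-(1 / 2) : ℝ) := by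
    have heq : (r / h) ^ (-(1 / 2) : ℝ) = ((r / h) ^ (2 : ℕ)) ^ (-(1 / 4) : ℝ) := by
      rw [← Real.rpow_natCast (r / h) 2, ← Real.rpow_mul ht.le]; norm_num
    rw [heq]
    push_cast
    exact Real.rpow_le_rpow_of_nonpos (by positivity)
      (by nlinarith [sq_nonneg (r / h)]) (by norm_num)
  have hrh : (r / h) ^ (-(1 / 2) : ℝ) = r ^ (-(1 / 2) : ℝ) * h ^ ((1 / 2) : ℝ) := by
    rw [Real.div_rpow hr.le hh0.le, div_eq_mul_inv, Real.rpow_neg hh0.le, inv_inv]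
  have hsε : s ^ (-ε) ≤ h ^ (-ε) :=
    Real.rpow_le_rpow_of_nonpos hh0 hs (by linarith)
  calc v * (1 + (r / h) ^ 2) ^ (-(1 / 4) : ℝ) * s ^ (-ε)
      ≤ v * (r / h) ^ (-(1 / 2) : ℝ) * h ^ (-ε) := by
        apply mul_le_mul (mul_le_mul_of_nonneg_left hB hv) hsε
          (Real.rpow_nonneg (le_of_lt (lt_of_lt_of_le hh0 hs)) _)
        positivity
    _ = (h ^ ((1 / 2) : ℝ) * h ^ (-ε)) * (v * r ^ (-(1 / 2) : ℝ)) := by rw [hrh]; ring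
    _ = h ^ (1 / 2 - ε) * (v * r ^ (-(1 / 2) : ℝ)) := by
        rw [← Real.rpow_add hh0]; ring_nf

/-- Hölder-type bound: if `sup_y ∫ |V(x)| |x-y|^{-1/2} dx ≤ C_V`, `0 < ε < 1/2`,
`q = (2ε)^{-1}`, `1/p + 1/q = 1`, then
`∫ |V(x)| ⟨|x-y|/h⟩^{-1/2} |x-x'|^{-ε} dx ≤ C₂ h^{1/2-ε}` for `0 < h ≤ 1`. -/
theorem stmt12 (V : EuclideanSpace ℝ (Fin 2) → ℝ) (CV : ℝ) (hCV : 0 ≤ CV)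
    (hV : ∀ y : EuclideanSpace ℝ (Fin 2),
      ∫⁻ x, ENNReal.ofReal (|V x| * ‖x - y‖ ^ (-(1 / 2) : ℝ)) ≤ ENNReal.ofReal CV)
    (ε : ℝ) (hε0 : 0 < ε) (hε1 : ε < 1 / 2)
    (q p : ℝ) (hq : q = (2 * ε)⁻¹) (hp : 1 / p + 1 / q = 1) :
    ∃ C₂ : ℝ, 0 < C₂ ∧ ∀ y x' : EuclideanSpace ℝ (Fin 2), ∀ h : ℝ, 0 < h → h ≤ 1 →
      ∫⁻ x, ENNReal.ofReal
          (|V x| * (1 + (‖x - y‖ / h) ^ 2) ^ (-(1 / 4) : ℝ) * ‖x - x'‖ ^ (-ε)) ≤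
        ENNReal.ofReal (C₂ * h ^ (1 / 2 - ε)) := by
  refine ⟨2 * CV + 1, by linarith, ?_⟩
  intro y x' h hh0 hh1
  have hhδ : (0 : ℝ) ≤ h ^ (1 / 2 - ε) := Real.rpow_nonneg hh0.le _
  set f : EuclideanSpace ℝ (Fin 2) → ℝ≥0∞ := fun x => ENNReal.ofReal
    (|V x| * (1 + (‖x - y‖ / h) ^ 2) ^ (-(1 / 4) : ℝ) * ‖x - x'‖ ^ (-ε)) with hf
  set A : Set (EuclideanSpace ℝ (Fin 2)) := {x | ‖x - x'‖ < h} with hAdef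
  have hA : MeasurableSet A := measurableSet_lt (by fun_prop) measurable_const
  set c : ℝ≥0∞ := ENNReal.ofReal (h ^ (1 / 2 - ε)) with hc
  have hbound1 : ∫⁻ x in A, f x ≤ c * ENNReal.ofReal CV := by
    calc ∫⁻ x in A, f x
        ≤ ∫⁻ x in A, c * ENNReal.ofReal (|V x| * ‖x - x'‖ ^ (-(1 / 2) : ℝ)) := by
          apply setLIntegral_mono' hA
          intro x hx
          rw [hc, ← ENNReal.ofReal_mul hhδ]
          apply ENNReal.ofReal_le_ofReal
          exact aux_near hh0 hε0 hε1 (abs_nonneg _) (norm_nonneg _) hx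
            (Real.rpow_nonneg (by positivity) _)
            (Real.rpow_le_one_of_one_le_of_nonpos (le_add_of_nonneg_right (by positivity)) (by norm_num))
      _ ≤ ∫⁻ x, c * ENNReal.ofReal (|V x| * ‖x - x'‖ ^ (-(1 / 2) : ℝ)) :=
          setLIntegral_le_lintegral _ _
      _ = c * ∫⁻ x, ENNReal.ofReal (|V x| * ‖x - x'‖ ^ (-(1 / 2) : ℝ)) :=
          lintegral_const_mul' _ _ ENNReal.ofReal_ne_top
      _ ≤ c * ENNReal.ofReal CV := mul_le_mul_right (hV x') _
  have hbound2 : ∫⁻ x in Aᶜ, f x ≤ c * ENNReal.ofReal CV := by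
    calc ∫⁻ x in Aᶜ, f x
        ≤ ∫⁻ x in Aᶜ, c * ENNReal.ofReal (|V x| * ‖x - y‖ ^ (-(1 / 2) : ℝ)) := by
          apply setLIntegral_mono_ae' hA.compl
          have hy : ∀ᵐ x : EuclideanSpace ℝ (Fin 2), x ≠ y := by
            rw [ae_iff]
            have : {x : EuclideanSpace ℝ (Fin 2) | ¬x ≠ y} = {y} := by
              ext x; simp
            rw [this]
            exact measure_singleton y
          filter_upwards [hy] with x hxy hx
          rw [hc, ← ENNReal.ofReal_mul hhδ]
          apply ENNReal.ofReal_le_ofReal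
          have hr : 0 < ‖x - y‖ := by
            simpa [sub_eq_zero] using hxy
          exact aux_far hh0 hε0 hε1 (abs_nonneg _) hr (not_lt.mp hx)
      _ ≤ ∫⁻ x, c * ENNReal.ofReal (|V x| * ‖x - y‖ ^ (-(1 / 2) : ℝ)) :=
          setLIntegral_le_lintegral _ _
      _ = c * ∫⁻ x, ENNReal.ofReal (|V x| * ‖x - y‖ ^ (-(1 / 2) : ℝ)) :=
          lintegral_const_mul' _ _ ENNReal.ofReal_ne_top
      _ ≤ c * ENNReal.ofReal CV := mul_le_mul_right (hV y) _
  calc ∫⁻ x, f x = (∫⁻ x in A, f x) + ∫⁻ x in Aᶜ, f x := (lintegral_add_compl f hA).symm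
    _ ≤ c * ENNReal.ofReal CV + c * ENNReal.ofReal CV := add_le_add hbound1 hbound2
    _ = ENNReal.ofReal (h ^ (1 / 2 - ε) * CV + h ^ (1 / 2 - ε) * CV) := by
        rw [hc, ← ENNReal.ofReal_mul hhδ, ← ENNReal.ofReal_add (by positivity) (by positivity)]
    _ ≤ ENNReal.ofReal ((2 * CV + 1) * h ^ (1 / 2 - ε)) := by
        apply ENNReal.ofReal_le_ofReal; nlinarith
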